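/- In any finitary transition system (one satisfying bounded nondeterminacy (BN) and finite approximability (FA)), for all processes p, q: L_∞(p) ⊆ L_∞(q) iff L_ω(p) ⊆ L_ω(q). Consequently ≲^B = ≲_ω = ≲^F and all coincide with inclusion of finitary theories. -/

import Mathlib

universe u

/-- A labelled transition system with a divergence predicate. -/
structure LTS (Proc : Type u) (Act : Type u) where
  trans : Proc → Act → Proc → Prop
  div : Proc → Prop

namespace LTS

variable {Proc Act : Type u}

def conv (T : LTS Proc Act) (p : Proc) : Prop := ¬ T.div p

def Prebisim (T : LTS Proc Act) (R : Proc → Proc → Prop) : Prop :=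
  ∀ p q, R p q →
    (∀ a p', T.trans p a p' → ∃ q', T.trans q a q' ∧ R p' q') ∧
    (T.conv p → T.conv q ∧
      ∀ a q', T.trans q a q' → ∃ p', T.trans p a p' ∧ R p' q')

def Bisim (T : LTS Proc Act) (p q : Proc) : Prop :=
  ∃ R, T.Prebisim R ∧ R p q

def Fop (T : LTS Proc Act) (R : Proc → Proc → Prop) : Proc → Proc → Prop :=
  fun p q =>
    (∀ a p', T.trans p a p' → ∃ q', T.trans q a q' ∧ R p' q') ∧
    (T.conv p → T.conv q ∧
      ∀ a q', T.trans q a q' → ∃ p', T.trans p a p' ∧ R p' q')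

def approxN (T : LTS Proc Act) : ℕ → Proc → Proc → Prop
  | 0 => fun _ _ => True
  | n + 1 => T.Fop (T.approxN n)

/-- The ω-approximant `≲_ω` of bisimulation. -/
def approxOmega (T : LTS Proc Act) (p q : Proc) : Prop := ∀ n, T.approxN n p q

/-- `sort(p)`. -/
def sortP (T : LTS Proc Act) (p : Proc) : Set Act :=
  {a | ∃ q r, Relation.ReflTransGen (fun x y => ∃ b, T.trans x b y) p q ∧ T.trans q a r}

/-- The capability set `C(p) ⊆ (Act × Proc) ∪ {⊥}` of a process. -/
def capSet (T : LTS Proc Act) (p : Proc) : Set (Option (Act × Proc)) :=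
  {c | (c = none ∧ T.div p) ∨ ∃ a q, c = some (a, q) ∧ T.trans p a q}

end LTS

/-- The two-sorted finitary domain logic `L_ω` for transition systems:
`false` is the process sort `π`, `true` the capability sort `κ`. -/
inductive LFF (Act : Type u) : Bool → Type u
  | tt {b} : LFF Act b
  | ff {b} : LFF Act b
  | and {b} (φ ψ : LFF Act b) : LFF Act b
  | or {b} (φ ψ : LFF Act b) : LFF Act b
  | box (φ : LFF Act true) : LFF Act false
  | dia (φ : LFF Act true) : LFF Act false
  | act (a : Act) (φ : LFF Act false) : LFF Act true

/-- Semantic domain of each sort: processes for `π`, capabilities for `κ`. -/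
def LSort (Proc Act : Type u) : Bool → Type u := fun b =>
  match b with
  | false => Proc
  | true => Option (Act × Proc)

/-- Satisfaction for the two-sorted finitary domain logic. -/
def LFF.sat {Proc Act : Type u} (T : LTS Proc Act) :
    {b : Bool} → LFF Act b → LSort Proc Act b → Prop
  | _, .tt, _ => True
  | _, .ff, _ => False
  | _, .and φ ψ, x => sat T φ x ∧ sat T ψ x
  | _, .or φ ψ, x => sat T φ x ∨ sat T ψ x
  | _, .box φ, p => ∀ c ∈ T.capSet p, sat T φ c
  | _, .dia φ, p => sat T φ none ∨ ∃ c ∈ T.capSet p, sat T φ c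
  | _, .act a φ, c => ∃ q, c = some (a, q) ∧ sat T φ q

/-- The axiom scheme of bounded non-determinacy (BN):
`□⋁_{i∈I} φ_i ≤ ⋁_{J fin ⊆ I} □⋁_{j∈J} φ_j` for finitary formulas `φ_i`. -/
def BN {Proc Act : Type u} (T : LTS Proc Act) : Prop :=
  ∀ (p : Proc) (ι : Type u) (φ : ι → LFF Act true),
    (∀ c ∈ T.capSet p, ∃ i, LFF.sat T (φ i) c) →
    ∃ J : Finset ι, ∀ c ∈ T.capSet p, ∃ i ∈ J, LFF.sat T (φ i) c

/-- Finite synchronisation trees. -/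
inductive FST (Act : Type u) : Type u
  | node (children : List (Act × FST Act)) (d : Bool) : FST Act

/-- The disjoint union of the finite-synchronisation-tree transition system
with a given transition system `T`. -/
def combF {Proc Act : Type u} (T : LTS Proc Act) : LTS (FST Act ⊕ Proc) Act where
  trans := fun x a y =>
    match x, y with
    | .inl (.node cs _), .inl t => (a, t) ∈ cs
    | .inr p, .inr q => T.trans p a q
    | _, _ => False
  div := fun x =>
    match x with
    | .inl (.node _ d) => d = true
    | .inr p => T.div p

/-- The finitary preorder `≲^F`: `p ≲^F q` iff every finite synchronisation tree
below `p` (in the bisimulation preorder) is below `q`. -/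
def FinPre {Proc Act : Type u} (T : LTS Proc Act) (p q : Proc) : Prop :=
  ∀ t : FST Act,
    (combF T).Bisim (.inl t) (.inr p) → (combF T).Bisim (.inl t) (.inr q)

inductive LFI (Act : Type u) : Bool → Type (u + 1)
  | conj {b} {ι : Type u} (f : ι → LFI Act b) : LFI Act b
  | disj {b} {ι : Type u} (f : ι → LFI Act b) : LFI Act b
  | box (φ : LFI Act true) : LFI Act false
  | dia (φ : LFI Act true) : LFI Act false
  | act (a : Act) (φ : LFI Act false) : LFI Act true

/-- Satisfaction for the two-sorted infinitary domain logic. -/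
def LFI.sat {Proc Act : Type u} (T : LTS Proc Act) :
    {b : Bool} → LFI Act b → LSort Proc Act b → Prop
  | _, .conj f, x => ∀ i, sat T (f i) x
  | _, .disj f, x => ∃ i, sat T (f i) x
  | _, .box φ, p => ∀ c ∈ T.capSet p, sat T φ c
  | _, .dia φ, p => sat T φ none ∨ ∃ c ∈ T.capSet p, sat T φ c
  | _, .act a φ, c => ∃ q, c = some (a, q) ∧ sat T φ q

/-- The axiom scheme of finite approximability (FA):
`⋀_{J fin ⊆ I} ◇⋀_{j∈J} φ_j ≤ ◇⋀_{i∈I} φ_i` for finitary formulas `φ_i`. -/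
def FA {Proc Act : Type u} (T : LTS Proc Act) : Prop :=
  ∀ (p : Proc) (ι : Type u) (φ : ι → LFF Act true),
    (∀ J : Finset ι,
      (∀ i ∈ J, LFF.sat T (φ i) none) ∨
        ∃ c ∈ T.capSet p, ∀ i ∈ J, LFF.sat T (φ i) c) →
    ((∀ i, LFF.sat T (φ i) none) ∨ ∃ c ∈ T.capSet p, ∀ i, LFF.sat T (φ i) c)

/-!
Bisimulations preserve both logics, and the approximants `≲_ω` preserve every finitary formula
by induction on modal depth. With the embedding of `L_ω` into `L_∞`, everything then reduces to
two facts about finitary systems.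

Inclusion of finitary theories is a prebisimulation. If `p -a→ p'` is matched by no
`a`-successor of `q`, pick for each such `q'` a formula true at `p'` and false at `q'`. Every
finite conjunction of them holds under `◇a` at `p`, hence at `q`, and (FA) then yields a single
`a`-successor of `q` satisfying all of them, a contradiction. Dually, (BN) turns a cover of the
capabilities of a convergent `p` into a finite disjunction under `□`, which `q` must satisfy.

`≲^F` is inclusion of finitary theories. A finite tree `t` has a characteristic formula, true at
`p` exactly when `t ≲ p`. Conversely, by induction on `φ`: if `p ⊨ φ`, every finite tree below
`p` refines to a finite tree below `p` all of whose upper bounds satisfy `φ`. Asking for a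
refinement, not just some tree, is what makes conjunctions go through; (BN) keeps the tree
finite in the `□` case.
-/

namespace LTS

variable {Proc Act : Type u} {T : LTS Proc Act} {p q : Proc}

theorem Fop.mono {R R' : Proc → Proc → Prop} (hRR' : ∀ p q, R p q → R' p q)
    (h : T.Fop R p q) : T.Fop R' p q := by
  obtain ⟨hfwd, hbwd⟩ := h
  refine ⟨fun a p' hp' => ?_, fun hp => ?_⟩
  · obtain ⟨q', hq', hR⟩ := hfwd a p' hp'
    exact ⟨q', hq', hRR' _ _ hR⟩
  · obtain ⟨hq, hback⟩ := hbwd hp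
    refine ⟨hq, fun a q' hq' => ?_⟩
    obtain ⟨p', hp', hR⟩ := hback a q' hq'
    exact ⟨p', hp', hRR' _ _ hR⟩

theorem prebisim_bisim : T.Prebisim T.Bisim := fun _ _ ⟨R, hR, hpq⟩ =>
  Fop.mono (fun _ _ h => ⟨R, hR, h⟩) (hR _ _ hpq)

theorem bisim_iff_fop : T.Bisim p q ↔ T.Fop T.Bisim p q :=
  ⟨fun h => prebisim_bisim p q h,
    fun h => ⟨T.Fop T.Bisim, fun _ _ h' => Fop.mono (fun _ _ => prebisim_bisim _ _) h', h⟩⟩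

theorem Bisim.approxOmega (h : T.Bisim p q) : T.approxOmega p q := by
  intro n
  induction n generalizing p q with
  | zero => trivial
  | succ n ih => exact Fop.mono (fun _ _ => ih) (prebisim_bisim p q h)

@[simp]
theorem none_mem_capSet : none ∈ T.capSet p ↔ T.div p := by
  simp [capSet]

@[simp]
theorem some_mem_capSet {a : Act} {p' : Proc} :
    some (a, p') ∈ T.capSet p ↔ T.trans p a p' := by
  simp [capSet]

end LTS

/-- `⊥` is related to every capability: a divergent process constrains nothing. -/
def CapRel {Proc Act : Type u} (R : Proc → Proc → Prop) (c d : Option (Act × Proc)) : Prop :=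
  c = none ∨ ∃ a p q, c = some (a, p) ∧ d = some (a, q) ∧ R p q

def SortRel {Proc Act : Type u} (R : Proc → Proc → Prop) :
    (b : Bool) → LSort Proc Act b → LSort Proc Act b → Prop
  | false => R
  | true => CapRel R

namespace LTS

variable {Proc Act : Type u} {T : LTS Proc Act} {R : Proc → Proc → Prop} {p q : Proc}

theorem Fop.exists_capRel_right (h : T.Fop R p q) {d : Option (Act × Proc)}
    (hd : d ∈ T.capSet q) : ∃ c ∈ T.capSet p, CapRel R c d := by
  by_cases hp : T.div p
  · exact ⟨none, by simpa using hp, Or.inl rfl⟩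
  obtain ⟨hq, hback⟩ := h.2 hp
  rcases hd with ⟨rfl, hqd⟩ | ⟨a, q', rfl, hq'⟩
  · exact absurd hqd hq
  obtain ⟨p', hp', hR⟩ := hback a q' hq'
  exact ⟨some (a, p'), by simpa using hp', Or.inr ⟨a, p', q', rfl, rfl, hR⟩⟩

theorem Fop.exists_capRel_left (h : T.Fop R p q) {c : Option (Act × Proc)}
    (hc : c ∈ T.capSet p) : ∃ d, (d = none ∨ d ∈ T.capSet q) ∧ CapRel R c d := by
  rcases hc with ⟨rfl, -⟩ | ⟨a, p', rfl, hp'⟩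
  · exact ⟨none, Or.inl rfl, Or.inl rfl⟩
  obtain ⟨q', hq', hR⟩ := h.1 a p' hp'
  exact ⟨some (a, q'), Or.inr (by simpa using hq'), Or.inr ⟨a, p', q', rfl, rfl, hR⟩⟩

end LTS

namespace LFI

variable {Proc Act : Type u} {T : LTS Proc Act} {R : Proc → Proc → Prop}

theorem sat_of_sortRel (hR : T.Prebisim R) :
    ∀ {b : Bool} (φ : LFI Act b) {x y : LSort Proc Act b},
      SortRel R b x y → sat T φ x → sat T φ y
  | _, .conj f, _, _, hxy, h => fun i => sat_of_sortRel hR (f i) hxy (h i)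
  | _, .disj f, _, _, hxy, h => by
      obtain ⟨i, h⟩ := h
      exact ⟨i, sat_of_sortRel hR (f i) hxy h⟩
  | _, .box ψ, p, q, hpq, h => fun d hd => by
      obtain ⟨c, hc, hcd⟩ := LTS.Fop.exists_capRel_right (hR p q hpq) hd
      exact sat_of_sortRel hR ψ hcd (h c hc)
  | _, .dia ψ, p, q, hpq, h => by
      rcases h with h | ⟨c, hc, h⟩
      · exact Or.inl h
      obtain ⟨d, hd | hd, hcd⟩ := LTS.Fop.exists_capRel_left (hR p q hpq) hc
      · subst hd; exact Or.inl (sat_of_sortRel hR ψ hcd h)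
      · exact Or.inr ⟨d, hd, sat_of_sortRel hR ψ hcd h⟩
  | _, .act a φ, _, _, hcd, h => by
      obtain ⟨p, hc, h⟩ := h
      obtain rfl | ⟨a', p', q, hc', rfl, hpq⟩ := hcd
      · cases hc
      obtain ⟨rfl, rfl⟩ : a' = a ∧ p' = p := by simpa using hc'.symm.trans hc
      exact ⟨q, rfl, sat_of_sortRel hR φ hpq h⟩

theorem sat_of_bisim {p q : Proc} (h : T.Bisim p q) (φ : LFI Act false) :
    sat T φ p → sat T φ q :=
  let ⟨_, hR, hpq⟩ := h
  sat_of_sortRel hR φ hpq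

end LFI

namespace LFF

variable {Proc Act : Type u} {T : LTS Proc Act} {b : Bool}

def depth : ∀ {b : Bool}, LFF Act b → ℕ
  | _, .tt | _, .ff => 0
  | _, .and φ ψ | _, .or φ ψ => max φ.depth ψ.depth
  | _, .box ψ | _, .dia ψ => ψ.depth + 1
  | _, .act _ φ => φ.depth

def conj (l : List (LFF Act b)) : LFF Act b := l.foldr .and .tt

def disj (l : List (LFF Act b)) : LFF Act b := l.foldr .or .ff

theorem sat_conj {l : List (LFF Act b)} {x : LSort Proc Act b} :
    sat T (conj l) x ↔ ∀ φ ∈ l, sat T φ x := by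
  induction l <;> simp_all [conj, sat]

theorem sat_disj {l : List (LFF Act b)} {x : LSort Proc Act b} :
    sat T (disj l) x ↔ ∃ φ ∈ l, sat T φ x := by
  induction l <;> simp_all [disj, sat]

theorem sat_act_none {a : Act} {φ : LFF Act false} :
    ¬ sat T (.act a φ) (none : Option (Act × Proc)) := by
  simp [sat]

theorem sat_act_some {a b : Act} {φ : LFF Act false} {p : Proc} :
    sat T (.act a φ) (some (b, p)) ↔ a = b ∧ sat T φ p := by
  constructor
  · rintro ⟨q, hq, h⟩
    obtain ⟨rfl, rfl⟩ := Prod.mk.inj (Option.some.inj hq)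
    exact ⟨rfl, h⟩
  · rintro ⟨rfl, h⟩
    exact ⟨p, rfl, h⟩

theorem sat_dia_act {a : Act} {φ : LFF Act false} {p : Proc} :
    sat T (.dia (.act a φ)) p ↔ ∃ p', T.trans p a p' ∧ sat T φ p' := by
  constructor
  · rintro (h | ⟨c, hc, h⟩)
    · exact absurd h sat_act_none
    rcases hc with ⟨rfl, -⟩ | ⟨b, p', rfl, hp'⟩
    · exact absurd h sat_act_none
    obtain ⟨rfl, hφ⟩ := sat_act_some.1 h
    exact ⟨p', hp', hφ⟩
  · rintro ⟨p', hp', h⟩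
    exact Or.inr ⟨some (a, p'), Or.inr ⟨a, p', rfl, hp'⟩, sat_act_some.2 ⟨rfl, h⟩⟩

theorem sat_box_disj_map_act {ι : Type*} {l : List ι} {f : ι → Act} {g : ι → LFF Act false}
    {p : Proc} :
    sat T (.box (disj (l.map fun i => .act (f i) (g i)))) p ↔
      T.conv p ∧ ∀ a p', T.trans p a p' → ∃ i ∈ l, f i = a ∧ sat T (g i) p' := by
  constructor
  · intro h
    refine ⟨fun hp => ?_, fun a p' hp' => ?_⟩
    · obtain ⟨φ, hφ, h⟩ := sat_disj.1 (h none (by simpa using hp))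
      obtain ⟨i, -, rfl⟩ := List.mem_map.1 hφ
      exact sat_act_none h
    · obtain ⟨φ, hφ, h⟩ := sat_disj.1 (h (some (a, p')) (by simpa using hp'))
      obtain ⟨i, hi, rfl⟩ := List.mem_map.1 hφ
      exact ⟨i, hi, sat_act_some.1 h⟩
  · rintro ⟨hp, h⟩ c (⟨rfl, hp'⟩ | ⟨a, p', rfl, hp'⟩)
    · exact absurd hp' hp
    · obtain ⟨i, hi, rfl, h⟩ := h a p' hp'
      exact sat_disj.2 ⟨_, List.mem_map_of_mem hi, sat_act_some.2 ⟨rfl, h⟩⟩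

theorem sat_of_sortRel_approxN :
    ∀ {b : Bool} (φ : LFF Act b) {n : ℕ}, φ.depth ≤ n → ∀ {x y : LSort Proc Act b},
      SortRel (T.approxN n) b x y → sat T φ x → sat T φ y
  | _, .tt, _, _, _, _, _, _ => trivial
  | _, .ff, _, _, _, _, _, h => h
  | _, .and φ ψ, _, hn, _, _, hxy, h =>
      ⟨sat_of_sortRel_approxN φ (le_of_max_le_left hn) hxy h.1,
        sat_of_sortRel_approxN ψ (le_of_max_le_right hn) hxy h.2⟩
  | _, .or φ ψ, _, hn, _, _, hxy, h =>
      h.imp (sat_of_sortRel_approxN φ (le_of_max_le_left hn) hxy)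
        (sat_of_sortRel_approxN ψ (le_of_max_le_right hn) hxy)
  | _, .box ψ, n, hn, p, q, hpq, h => fun d hd => by
      obtain ⟨m, rfl⟩ : ∃ m, n = m + 1 := ⟨n - 1, by simp [depth] at hn; omega⟩
      obtain ⟨c, hc, hcd⟩ := LTS.Fop.exists_capRel_right hpq hd
      exact sat_of_sortRel_approxN ψ (by simpa [depth] using hn) hcd (h c hc)
  | _, .dia ψ, n, hn, p, q, hpq, h => by
      obtain ⟨m, rfl⟩ : ∃ m, n = m + 1 := ⟨n - 1, by simp [depth] at hn; omega⟩
      have hm : ψ.depth ≤ m := by simpa [depth] using hn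
      rcases h with h | ⟨c, hc, h⟩
      · exact Or.inl h
      obtain ⟨d, hd | hd, hcd⟩ := LTS.Fop.exists_capRel_left hpq hc
      · subst hd; exact Or.inl (sat_of_sortRel_approxN ψ hm hcd h)
      · exact Or.inr ⟨d, hd, sat_of_sortRel_approxN ψ hm hcd h⟩
  | _, .act a φ, _, hn, _, _, hcd, h => by
      obtain ⟨p, hc, h⟩ := h
      obtain rfl | ⟨a', p', q, hc', rfl, hpq⟩ := hcd
      · cases hc
      obtain ⟨rfl, rfl⟩ : a' = a ∧ p' = p := by simpa using hc'.symm.trans hc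
      exact ⟨q, rfl, sat_of_sortRel_approxN φ hn hpq h⟩

theorem sat_of_sat_none (ψ : LFF Act true) (c : Option (Act × Proc))
    (h : sat T ψ (none : Option (Act × Proc))) : sat T ψ c :=
  sat_of_sortRel_approxN (T := T) ψ le_rfl (Or.inl rfl : CapRel _ none c) h

def toLFI : ∀ {b : Bool}, LFF Act b → LFI Act b
  | _, .tt => .conj (PEmpty.elim : PEmpty.{u + 1} → _)
  | _, .ff => .disj (PEmpty.elim : PEmpty.{u + 1} → _)
  | _, .and φ ψ => .conj fun i : ULift Bool => bif i.down then φ.toLFI else ψ.toLFI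
  | _, .or φ ψ => .disj fun i : ULift Bool => bif i.down then φ.toLFI else ψ.toLFI
  | _, .box ψ => .box ψ.toLFI
  | _, .dia ψ => .dia ψ.toLFI
  | _, .act a φ => .act a φ.toLFI

theorem sat_toLFI : ∀ {b : Bool} (φ : LFF Act b) (x : LSort Proc Act b),
    LFI.sat T φ.toLFI x ↔ sat T φ x
  | _, .tt, _ => by simp [toLFI, LFI.sat, sat]
  | _, .ff, _ => by simp [toLFI, LFI.sat, sat]
  | _, .and φ ψ, x => by simp [toLFI, LFI.sat, sat, sat_toLFI φ, sat_toLFI ψ, and_comm]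
  | _, .or φ ψ, x => by simp [toLFI, LFI.sat, sat, sat_toLFI φ, sat_toLFI ψ, or_comm]
  | _, .box ψ, _ => forall₂_congr fun c _ => sat_toLFI ψ c
  | _, .dia ψ, _ =>
      or_congr (sat_toLFI ψ none) (exists_congr fun c => and_congr_right fun _ => sat_toLFI ψ c)
  | _, .act a φ, _ => exists_congr fun q => and_congr_right fun _ => sat_toLFI φ q

end LFF

namespace LTS

variable {Proc Act : Type u} {T : LTS Proc Act} {p q : Proc}

def TheoryLE (T : LTS Proc Act) (p q : Proc) : Prop :=
  ∀ φ : LFF Act false, LFF.sat T φ p → LFF.sat T φ q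

theorem approxOmega.theoryLE (h : T.approxOmega p q) : T.TheoryLE p q := fun φ =>
  LFF.sat_of_sortRel_approxN φ le_rfl (h φ.depth)

theorem theoryLE_of_lfi (h : ∀ φ : LFI Act false, LFI.sat T φ p → LFI.sat T φ q) :
    T.TheoryLE p q := fun φ hφ =>
  (LFF.sat_toLFI φ q).1 (h _ ((LFF.sat_toLFI φ p).2 hφ))

end LTS

section Finitary

variable {Proc Act : Type u} {T : LTS Proc Act} {p q : Proc} {a : Act}

open LFF

theorem BN.exists_sat_box_disj (hBN : BN T) (hp : T.conv p)
    (θ : {x : Act × Proc // T.trans p x.1 x.2} → LFF Act false)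
    (hθ : ∀ x, sat T (θ x) x.1.2) :
    ∃ J : Finset {x : Act × Proc // T.trans p x.1 x.2},
      sat T (.box (disj (J.toList.map fun x => .act x.1.1 (θ x)))) p := by
  obtain ⟨J, hJ⟩ := hBN p _ (fun x => .act x.1.1 (θ x)) fun c hc => by
    rcases hc with ⟨rfl, hp'⟩ | ⟨b, p', rfl, hp'⟩
    · exact absurd hp' hp
    · exact ⟨⟨(b, p'), hp'⟩, sat_act_some.2 ⟨rfl, hθ _⟩⟩
  refine ⟨J, sat_box_disj_map_act.2 ⟨hp, fun a p' hp' => ?_⟩⟩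
  obtain ⟨x, hx, h⟩ := hJ (some (a, p')) (by simpa using hp')
  exact ⟨x, Finset.mem_toList.2 hx, sat_act_some.1 h⟩

theorem FA.exists_trans_forall_sat (hFA : FA T) {ι : Type u} (χ : ι → LFF Act false)
    (h : ∀ J : Finset ι, ∃ q', T.trans q a q' ∧ ∀ i ∈ J, sat T (χ i) q') :
    ∃ q', T.trans q a q' ∧ ∀ i, sat T (χ i) q' := by
  cases isEmpty_or_nonempty ι with
  | inl hι =>
    obtain ⟨q', hq', -⟩ := h ∅
    exact ⟨q', hq', isEmptyElim⟩
  | inr hι =>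
    obtain ⟨i₀⟩ := hι
    obtain hnone | ⟨c, hc, hall⟩ := hFA q ι (fun i => .act a (χ i)) fun J => by
      obtain ⟨q', hq', hJ⟩ := h J
      exact Or.inr ⟨some (a, q'), by simpa using hq',
        fun i hi => sat_act_some.2 ⟨rfl, hJ i hi⟩⟩
    · exact absurd (hnone i₀) sat_act_none
    · obtain ⟨q', rfl, -⟩ := hall i₀
      exact ⟨q', by simpa using hc, fun i => (sat_act_some.1 (hall i)).2⟩

namespace LTS.TheoryLE

theorem exists_trans_right (hFA : FA T) (hpq : T.TheoryLE p q) {p' : Proc}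
    (hp' : T.trans p a p') : ∃ q', T.trans q a q' ∧ T.TheoryLE p' q' := by
  by_contra! hsep
  have : ∀ x : {q' // T.trans q a q'}, ∃ χ : LFF Act false, sat T χ p' ∧ ¬ sat T χ x.1 :=
    fun x => by simpa [TheoryLE] using hsep x.1 x.2
  choose χ hχ using this
  obtain ⟨q', hq', hall⟩ := hFA.exists_trans_forall_sat χ fun J => by
    have hp : sat T (.dia (.act a (conj (J.toList.map χ)))) p :=
      sat_dia_act.2 ⟨p', hp', sat_conj.2 fun φ hφ => by
        obtain ⟨x, -, rfl⟩ := List.mem_map.1 hφ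
        exact (hχ x).1⟩
    obtain ⟨q', hq', h⟩ := sat_dia_act.1 (hpq _ hp)
    exact ⟨q', hq', fun x hx => sat_conj.1 h _ (List.mem_map_of_mem (Finset.mem_toList.2 hx))⟩
  exact (hχ ⟨q', hq'⟩).2 (hall _)

theorem conv (hBN : BN T) (hpq : T.TheoryLE p q) (hp : T.conv p) : T.conv q := by
  obtain ⟨J, hJ⟩ := hBN.exists_sat_box_disj hp (fun _ => .tt) fun _ => trivial
  exact (sat_box_disj_map_act.1 (hpq _ hJ)).1

theorem exists_trans_left (hBN : BN T) (hpq : T.TheoryLE p q) (hp : T.conv p) {q' : Proc}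
    (hq' : T.trans q a q') : ∃ p', T.trans p a p' ∧ T.TheoryLE p' q' := by
  by_contra! hsep
  have : ∀ x : {x : Act × Proc // T.trans p x.1 x.2},
      ∃ θ : LFF Act false, sat T θ x.1.2 ∧ (x.1.1 = a → ¬ sat T θ q') := by
    rintro ⟨⟨b, p'⟩, hp'⟩
    by_cases hb : b = a
    · subst hb
      simpa [TheoryLE] using hsep p' hp'
    · exact ⟨.tt, trivial, fun h => absurd h hb⟩
  choose θ hθ using this
  obtain ⟨J, hJ⟩ := hBN.exists_sat_box_disj hp θ fun x => (hθ x).1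
  obtain ⟨x, -, hxa, hx⟩ := (sat_box_disj_map_act.1 (hpq _ hJ)).2 a q' hq'
  exact (hθ x).2 hxa hx

theorem prebisim (hBN : BN T) (hFA : FA T) : T.Prebisim T.TheoryLE := fun _ _ hpq =>
  ⟨fun _ _ => hpq.exists_trans_right hFA,
    fun hp => ⟨hpq.conv hBN hp, fun _ _ => hpq.exists_trans_left hBN hp⟩⟩

end LTS.TheoryLE

end Finitary

namespace FST

variable {Proc Act : Type u} {T : LTS Proc Act} {p : Proc}

abbrev Below (T : LTS Proc Act) (t : FST Act) (p : Proc) : Prop :=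
  (combF T).Bisim (.inl t) (.inr p)

theorem below_node_iff {cs : List (Act × FST Act)} {d : Bool} :
    (node cs d).Below T p ↔
      (∀ a c, (a, c) ∈ cs → ∃ p', T.trans p a p' ∧ c.Below T p') ∧
      (d = false →
        T.conv p ∧ ∀ a p', T.trans p a p' → ∃ c, (a, c) ∈ cs ∧ c.Below T p') := by
  rw [Below, LTS.bisim_iff_fop]
  constructor
  · rintro ⟨hfwd, hbwd⟩
    refine ⟨fun a c hc => ?_, fun hd => ?_⟩
    · obtain ⟨_ | p', hp', h⟩ := hfwd a (.inl c) hc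
      · exact hp'.elim
      · exact ⟨p', hp', h⟩
    · obtain ⟨hp, hback⟩ := hbwd (by simp [LTS.conv, combF, hd])
      refine ⟨hp, fun a p' hp' => ?_⟩
      obtain ⟨c | _, hc, h⟩ := hback a (.inr p') hp'
      · exact ⟨c, hc, h⟩
      · exact hc.elim
  · rintro ⟨hfwd, hbwd⟩
    refine ⟨fun a x hx => ?_, fun hd => ?_⟩
    · obtain _ | _ := x
      · obtain ⟨p', hp', h⟩ := hfwd a _ hx
        exact ⟨.inr p', hp', h⟩
      · exact hx.elim
    · obtain ⟨hp, hback⟩ := hbwd (by simpa [LTS.conv, combF] using hd)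
      refine ⟨hp, fun a x hx => ?_⟩
      obtain _ | p' := x
      · exact hx.elim
      · obtain ⟨c, hc, h⟩ := hback a p' hx
        exact ⟨.inl c, hc, h⟩

def bot : FST Act := node [] true

instance : Inhabited (FST Act) := ⟨bot⟩

theorem bot_below : (bot : FST Act).Below T p :=
  below_node_iff.2 ⟨by simp, by simp⟩

theorem Below.exists_child {cs : List (Act × FST Act)} {d : Bool} (h : (node cs d).Below T p)
    {a : Act} {p' : Proc} (hp' : T.trans p a p') :
    ∃ c, c.Below T p' ∧ (d = false → (a, c) ∈ cs) := by
  cases d with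
  | true => exact ⟨bot, bot_below, nofun⟩
  | false =>
    obtain ⟨c, hc, h⟩ := ((below_node_iff.1 h).2 rfl).2 a p' hp'
    exact ⟨c, h, fun _ => hc⟩

theorem sizeOf_lt_of_mem {cs : List (Act × FST Act)} {d : Bool} {x : Act × FST Act}
    (hx : x ∈ cs) : sizeOf x.2 < sizeOf (node cs d) := by
  have := List.sizeOf_lt_of_mem hx
  obtain ⟨a, c⟩ := x
  simp only [node.sizeOf_spec, Prod.mk.sizeOf_spec] at this ⊢
  omega

def charFormula : FST Act → LFF Act false
  | node cs d =>
    .and (LFF.conj (cs.map fun x => .dia (.act x.1 (charFormula x.2))))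
      (if d then .tt else .box (LFF.disj (cs.map fun x => .act x.1 (charFormula x.2))))
  decreasing_by all_goals exact sizeOf_lt_of_mem ‹_›

theorem sat_charFormula : ∀ {t : FST Act} {p : Proc}, LFF.sat T t.charFormula p ↔ t.Below T p
  | node cs d, p => by
    have ih : ∀ x ∈ cs, ∀ p', LFF.sat T x.2.charFormula p' ↔ x.2.Below T p' :=
      fun x hx p' => sat_charFormula (t := x.2)
    rw [charFormula, below_node_iff]
    refine and_congr ?_ ?_
    · refine LFF.sat_conj.trans ?_
      simp only [List.forall_mem_map, LFF.sat_dia_act, Prod.forall]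
      exact forall₃_congr fun a c hc => exists_congr fun p' => and_congr_right fun _ =>
        ih (a, c) hc p'
    · cases d with
      | true => exact iff_of_true trivial nofun
      | false =>
        rw [if_neg Bool.false_ne_true, LFF.sat_box_disj_map_act]
        simp only [true_implies, Prod.exists]
        refine and_congr_right fun _ => forall₃_congr fun a p' _ => ?_
        exact ⟨fun ⟨b, c, hc, hb, h⟩ => ⟨c, hb ▸ hc, (ih _ hc p').1 h⟩,
          fun ⟨c, hc, h⟩ => ⟨a, c, hc, rfl, (ih _ hc p').2 h⟩⟩
  termination_by t => t
  decreasing_by exact sizeOf_lt_of_mem hx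

theorem _root_.BN.exists_children (hBN : BN T) (hp : T.conv p) {G : Act → FST Act → Prop}
    (h : ∀ a p', T.trans p a p' → ∃ c, c.Below T p' ∧ G a c) :
    ∃ l : List (Act × FST Act),
      (∀ x ∈ l, (∃ p', T.trans p x.1 p' ∧ x.2.Below T p') ∧ G x.1 x.2) ∧
      ∀ a p', T.trans p a p' → ∃ c, (a, c) ∈ l ∧ c.Below T p' := by
  choose C hC using fun x : {x : Act × Proc // T.trans p x.1 x.2} => h x.1.1 x.1.2 x.2
  obtain ⟨J, hJ⟩ := hBN.exists_sat_box_disj hp (fun x => (C x).charFormula)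
    fun x => sat_charFormula.2 (hC x).1
  refine ⟨J.toList.map fun x => (x.1.1, C x), fun y hy => ?_, fun a p' hp' => ?_⟩
  · obtain ⟨x, -, rfl⟩ := List.mem_map.1 hy
    exact ⟨⟨x.1.2, x.2, (hC x).1⟩, (hC x).2⟩
  · obtain ⟨x, hx, rfl, h⟩ := (LFF.sat_box_disj_map_act.1 hJ).2 a p' hp'
    exact ⟨C x, List.mem_map_of_mem hx, sat_charFormula.1 h⟩

def Forceable (T : LTS Proc Act) (t₀ : FST Act) (p : Proc) (P : Proc → Prop) : Prop :=
  ∃ t : FST Act, t.Below T p ∧ ∀ q, t.Below T q → t₀.Below T q ∧ P q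

variable {t₀ : FST Act} {P Q : Proc → Prop}

theorem Forceable.of_forall (h₀ : t₀.Below T p) (hP : ∀ q, P q) : Forceable T t₀ p P :=
  ⟨t₀, h₀, fun q hq => ⟨hq, hP q⟩⟩

theorem Forceable.mono (h : Forceable T t₀ p P) (hPQ : ∀ q, P q → Q q) :
    Forceable T t₀ p Q :=
  let ⟨t, ht, hforce⟩ := h
  ⟨t, ht, fun q hq => (hforce q hq).imp_right (hPQ q)⟩

theorem Forceable.and (h : Forceable T t₀ p P)
    (h' : ∀ t₁ : FST Act, t₁.Below T p → Forceable T t₁ p Q) :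
    Forceable T t₀ p fun q => P q ∧ Q q := by
  obtain ⟨t₁, ht₁, hforce₁⟩ := h
  obtain ⟨t₂, ht₂, hforce₂⟩ := h' t₁ ht₁
  refine ⟨t₂, ht₂, fun q hq => ?_⟩
  obtain ⟨hq₁, hQ⟩ := hforce₂ q hq
  obtain ⟨hq₀, hP⟩ := hforce₁ q hq₁
  exact ⟨hq₀, hP, hQ⟩

theorem forceable_exists_trans (h₀ : t₀.Below T p) {a : Act} {p' : Proc}
    (hp' : T.trans p a p') (h : ∀ c₀ : FST Act, c₀.Below T p' → Forceable T c₀ p' Q) :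
    Forceable T t₀ p fun q => ∃ q', T.trans q a q' ∧ Q q' := by
  obtain ⟨cs₀, d₀⟩ := t₀
  obtain ⟨c₀, hc₀, hmem⟩ := h₀.exists_child hp'
  obtain ⟨c, hc, hforce⟩ := h c₀ hc₀
  obtain ⟨hfwd₀, hbwd₀⟩ := below_node_iff.1 h₀
  refine ⟨node ((a, c) :: cs₀) d₀, below_node_iff.2 ⟨?_, fun hd => ?_⟩, fun q hq => ?_⟩
  · rintro b c' (_ | ⟨_, hc'⟩)
    · exact ⟨p', hp', hc⟩
    · exact hfwd₀ b c' hc'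
  · obtain ⟨hp, hback⟩ := hbwd₀ hd
    exact ⟨hp, fun b r hr =>
      (hback b r hr).imp fun c' ⟨hc', h⟩ => ⟨List.mem_cons_of_mem _ hc', h⟩⟩
  obtain ⟨hfwd, hbwd⟩ := below_node_iff.1 hq
  obtain ⟨q', hq', hcq'⟩ := hfwd a c List.mem_cons_self
  refine ⟨below_node_iff.2 ⟨fun b c' hc' => hfwd b c' (List.mem_cons_of_mem _ hc'),
    fun hd => ?_⟩, q', hq', (hforce q' hcq').2⟩
  obtain ⟨hq, hback⟩ := hbwd hd
  refine ⟨hq, fun b r hr => ?_⟩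
  obtain ⟨c', hc' | ⟨_, hc'⟩, h⟩ := hback b r hr
  · exact ⟨c₀, hmem hd, (hforce r h).1⟩
  · exact ⟨c', hc', h⟩

theorem forceable_node_of_children {cs₀ : List (Act × FST Act)} {d₀ : Bool}
    {Q : Act → Proc → Prop} (cs : List (Act × FST Act)) (hp : T.conv p)
    (hcs : ∀ x ∈ cs, (∃ p', T.trans p x.1 p' ∧ x.2.Below T p') ∧
      ∃ c₀, (d₀ = false → (x.1, c₀) ∈ cs₀) ∧
        ∀ q, x.2.Below T q → c₀.Below T q ∧ Q x.1 q)
    (hcover : ∀ a p', T.trans p a p' → ∃ c, (a, c) ∈ cs ∧ c.Below T p')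
    (hcs₀ : ∀ x ∈ cs₀, ∃ c, (x.1, c) ∈ cs ∧ ∀ q, c.Below T q → x.2.Below T q) :
    Forceable T (node cs₀ d₀) p fun q => T.conv q ∧ ∀ a q', T.trans q a q' → Q a q' := by
  refine ⟨node cs false,
    below_node_iff.2 ⟨fun a c hc => (hcs _ hc).1, fun _ => ⟨hp, hcover⟩⟩, fun q hq => ?_⟩
  obtain ⟨hfwd, hbwd⟩ := below_node_iff.1 hq
  obtain ⟨hq, hback⟩ := hbwd rfl
  have hchild : ∀ a q', T.trans q a q' →
      ∃ c₀, (d₀ = false → (a, c₀) ∈ cs₀) ∧ c₀.Below T q' ∧ Q a q' := by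
    intro a q' hq'
    obtain ⟨c, hc, hcq⟩ := hback a q' hq'
    obtain ⟨c₀, hmem, hforce⟩ := (hcs _ hc).2
    exact ⟨c₀, hmem, hforce q' hcq⟩
  refine ⟨below_node_iff.2 ⟨fun a c₀ hc₀ => ?_, fun hd => ⟨hq, fun a q' hq' => ?_⟩⟩,
    hq, fun a q' hq' => ?_⟩
  · obtain ⟨c, hc, hcc₀⟩ := hcs₀ _ hc₀
    obtain ⟨q', hq', hcq⟩ := hfwd a c hc
    exact ⟨q', hq', hcc₀ q' hcq⟩
  · obtain ⟨c₀, hmem, hc₀, -⟩ := hchild a q' hq'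
    exact ⟨c₀, hmem hd, hc₀⟩
  · obtain ⟨-, -, -, hQ⟩ := hchild a q' hq'
    exact hQ

theorem forceable_conv_forall_trans (hBN : BN T) (hp : T.conv p) (h₀ : t₀.Below T p)
    {Q : Act → Proc → Prop}
    (h : ∀ a p', T.trans p a p' →
      ∀ c₀ : FST Act, c₀.Below T p' → Forceable T c₀ p' (Q a)) :
    Forceable T t₀ p fun q => T.conv q ∧ ∀ a q', T.trans q a q' → Q a q' := by
  obtain ⟨cs₀, d₀⟩ := t₀
  have hE : ∀ x ∈ cs₀, ∃ c : FST Act, (∃ p', T.trans p x.1 p' ∧ c.Below T p') ∧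
      ∀ q, c.Below T q → x.2.Below T q ∧ Q x.1 q := by
    rintro ⟨a, c₀⟩ hx
    obtain ⟨p', hp', hc₀⟩ := (below_node_iff.1 h₀).1 a c₀ hx
    obtain ⟨c, hc, hforce⟩ := h a p' hp' c₀ hc₀
    exact ⟨c, ⟨p', hp', hc⟩, hforce⟩
  choose! E hE using hE
  obtain ⟨l, hl, hcover⟩ := hBN.exists_children hp
    (G := fun a c => ∃ c₀, (d₀ = false → (a, c₀) ∈ cs₀) ∧
      ∀ q, c.Below T q → c₀.Below T q ∧ Q a q)
    fun a p' hp' => by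
      obtain ⟨c₀, hc₀, hmem⟩ := h₀.exists_child hp'
      obtain ⟨c, hc, hforce⟩ := h a p' hp' c₀ hc₀
      exact ⟨c, hc, c₀, hmem, hforce⟩
  have hE_mem : ∀ x ∈ cs₀, (x.1, E x) ∈ cs₀.map (fun x => (x.1, E x)) ++ l :=
    fun x hx => List.mem_append_left _ (List.mem_map_of_mem hx)
  refine forceable_node_of_children _ hp (fun x hx => ?_) (fun a p' hp' => ?_)
    fun x hx => ⟨E x, hE_mem x hx, fun q hq => ((hE x hx).2 q hq).1⟩
  · rcases List.mem_append.1 hx with hx | hx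
    · obtain ⟨y, hy, rfl⟩ := List.mem_map.1 hx
      exact ⟨(hE y hy).1, y.2, fun _ => hy, (hE y hy).2⟩
    · exact hl x hx
  · obtain ⟨c, hc, h⟩ := hcover a p' hp'
    exact ⟨c, List.mem_append_right _ hc, h⟩

end FST

namespace LFF

variable {Proc Act : Type u} {T : LTS Proc Act}

def ForcedByTrees (T : LTS Proc Act) : ∀ {b : Bool}, LFF Act b → Prop
  | false, φ => ∀ (p : Proc) (t₀ : FST Act), sat T φ p → t₀.Below T p →
      FST.Forceable T t₀ p (sat T φ)
  | true, ψ => ∀ (a : Act) (p : Proc) (t₀ : FST Act), sat T ψ (some (a, p)) →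
      t₀.Below T p → FST.Forceable T t₀ p fun q => sat T ψ (some (a, q))

theorem forcedByTrees (hBN : BN T) : ∀ {b : Bool} (φ : LFF Act b), φ.ForcedByTrees T
  | false, .tt => fun _ _ _ h₀ => .of_forall h₀ fun _ => trivial
  | true, .tt => fun _ _ _ _ h₀ => .of_forall h₀ fun _ => trivial
  | false, .ff => fun _ _ h => h.elim
  | true, .ff => fun _ _ _ h => h.elim
  | false, .and φ ψ => fun p t₀ h h₀ =>
      (forcedByTrees hBN φ p t₀ h.1 h₀).and fun t₁ h₁ =>
        forcedByTrees hBN ψ p t₁ h.2 h₁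
  | true, .and φ ψ => fun a p t₀ h h₀ =>
      (forcedByTrees hBN φ a p t₀ h.1 h₀).and fun t₁ h₁ =>
        forcedByTrees hBN ψ a p t₁ h.2 h₁
  | false, .or φ ψ => fun p t₀ h h₀ => h.elim
      (fun h => (forcedByTrees hBN φ p t₀ h h₀).mono fun _ => Or.inl)
      (fun h => (forcedByTrees hBN ψ p t₀ h h₀).mono fun _ => Or.inr)
  | true, .or φ ψ => fun a p t₀ h h₀ => h.elim
      (fun h => (forcedByTrees hBN φ a p t₀ h h₀).mono fun _ => Or.inl)
      (fun h => (forcedByTrees hBN ψ a p t₀ h h₀).mono fun _ => Or.inr)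
  | false, .box ψ => fun p t₀ h h₀ => by
      by_cases hp : T.div p
      · have hψ := h none (by simpa using hp)
        exact .of_forall h₀ fun _ c _ => sat_of_sat_none ψ c hψ
      refine (FST.forceable_conv_forall_trans hBN hp h₀ fun a p' hp' c₀ hc₀ =>
        forcedByTrees hBN ψ a p' c₀ (h _ (by simpa using hp')) hc₀).mono ?_
      rintro q ⟨hq, hψ⟩ c (⟨rfl, hq'⟩ | ⟨a, q', rfl, hq'⟩)
      · exact absurd hq' hq
      · exact hψ a q' hq'
  | false, .dia ψ => fun p t₀ h h₀ => by
      rcases h with h | ⟨c, hc, h⟩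
      · exact .of_forall h₀ fun _ => Or.inl h
      rcases hc with ⟨rfl, -⟩ | ⟨a, p', rfl, hp'⟩
      · exact .of_forall h₀ fun _ => Or.inl h
      refine (FST.forceable_exists_trans h₀ hp' fun c₀ hc₀ =>
        forcedByTrees hBN ψ a p' c₀ h hc₀).mono ?_
      rintro q ⟨q', hq', h⟩
      exact Or.inr ⟨_, by simpa using hq', h⟩
  | true, .act a φ => fun _ p t₀ h h₀ => by
      obtain ⟨rfl, hφ⟩ := sat_act_some.1 h
      exact (forcedByTrees hBN φ p t₀ hφ h₀).mono fun _ h => sat_act_some.2 ⟨rfl, h⟩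

end LFF

section

variable {Proc Act : Type u} {T : LTS Proc Act} {p q : Proc}

theorem LTS.TheoryLE.finPre (h : T.TheoryLE p q) : FinPre T p q := fun _ ht =>
  FST.sat_charFormula.1 (h _ (FST.sat_charFormula.2 ht))

theorem FinPre.theoryLE (hBN : BN T) (h : FinPre T p q) : T.TheoryLE p q := fun φ hφ =>
  let ⟨t, ht, hforce⟩ := LFF.forcedByTrees hBN φ p FST.bot hφ FST.bot_below
  (hforce q (h t ht)).2

end

/-- In any finitary transition system (one satisfying (BN) and (FA)):
inclusion of infinitary theories coincides with inclusion of finitary theories,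
and `≲^B = ≲_ω = ≲^F`, all coinciding with inclusion of finitary theories. -/
theorem finitary_ts_characterisation {Proc Act : Type u} (T : LTS Proc Act)
    (hBN : BN T) (hFA : FA T) :
    (∀ p q : Proc,
      (∀ φ : LFI Act false, LFI.sat T φ p → LFI.sat T φ q) ↔
      (∀ φ : LFF Act false, LFF.sat T φ p → LFF.sat T φ q)) ∧
    (∀ p q : Proc, T.Bisim p q ↔ T.approxOmega p q) ∧
    (∀ p q : Proc, T.Bisim p q ↔ FinPre T p q) ∧
    (∀ p q : Proc, T.Bisim p q ↔
      ∀ φ : LFF Act false, LFF.sat T φ p → LFF.sat T φ q) := by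
  have hbisim : ∀ p q, T.Bisim p q ↔ T.TheoryLE p q := fun p q =>
    ⟨fun h => h.approxOmega.theoryLE, fun h => ⟨_, LTS.TheoryLE.prebisim hBN hFA, h⟩⟩
  exact ⟨fun p q => ⟨LTS.theoryLE_of_lfi, fun h => LFI.sat_of_bisim ((hbisim p q).2 h)⟩,
    fun p q => ⟨LTS.Bisim.approxOmega, fun h => (hbisim p q).2 h.theoryLE⟩,
    fun p q => (hbisim p q).trans ⟨LTS.TheoryLE.finPre, FinPre.theoryLE hBN⟩, hbisim⟩
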